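/- Let F_q be a finite field with q odd. For nonzero coprime polynomials α, β ∈ F_q[t], the quadratic residue symbols satisfy the reciprocity law: (α/β)·(β/α)^{-1} = (-1)^{((q-1)/2)·deg(α)·deg(β)} · sgn(α)^{((q-1)/2)·deg(β)} · sgn(β)^{-((q-1)/2)·deg(α)}, where sgn denotes the leading coefficient. -/

import Mathlib

open Polynomial UniqueFactorizationMonoid

open scoped Classical in
/-- The quadratic residue symbol `(α/P) ∈ {0, ±1}` (as an element of `F`) for a monic
irreducible `P`, defined via Euler's criterion `α^((q^{deg P}-1)/2) ≡ (α/P) mod P`. -/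
noncomputable def eulerSym (F : Type) [Field F] [Fintype F] (α P : Polynomial F) : F :=
  if P ∣ α ^ ((Fintype.card F ^ P.natDegree - 1) / 2) - 1 then 1
  else if P ∣ α ^ ((Fintype.card F ^ P.natDegree - 1) / 2) + 1 then -1 else 0

open scoped Classical in
/-- The general quadratic residue symbol `(α/β)`, extended multiplicatively over the
monic irreducible factors (with multiplicity) of `β`. -/
noncomputable def qrSym (F : Type) [Field F] [Fintype F] (α β : Polynomial F) : F :=
  ((normalizedFactors β).map fun P => eulerSym F α P).prod

/-! For a monic irreducible `P ∤ α`, Euler's criterion in the field `F[t]/(P)` with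
`q ^ deg P` elements gives `(α/P) = N(α mod P) ^ ((q-1)/2)`, and the norm
`N(α mod P) = ∏_{P(θ)=0} α(θ)` is the resultant `Res(P, α)`. Multiplicativity of the resultant
then gives `(α/β) = (sgn(β)^(-deg α) · Res(β, α)) ^ ((q-1)/2)`, so the reciprocity law is the
antisymmetry `Res(α, β) = (-1)^(deg α · deg β) · Res(β, α)`. -/

theorem Nat.pow_sub_one_div_mul_half {q : ℕ} (hq : Odd q) (d : ℕ) :
    (q ^ d - 1) / (q - 1) * ((q - 1) / 2) = (q ^ d - 1) / 2 := by
  obtain ⟨s, hs⟩ := Nat.sub_one_dvd_pow_sub_one (x := q) (n := d)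
  obtain ⟨k, rfl⟩ := hq
  rcases Nat.eq_zero_or_pos k with rfl | hk
  · simp
  rw [hs, Nat.add_sub_cancel, Nat.mul_div_cancel_left s (by omega),
    Nat.mul_div_cancel_left k two_pos, mul_assoc, Nat.mul_div_cancel_left _ two_pos, mul_comm]

theorem AdjoinRoot.norm_mk_eq_resultant {F : Type*} [Field F] [PerfectField F] {P : F[X]}
    [Fact (Irreducible P)] (hm : P.Monic) (α : F[X]) :
    Algebra.norm F (AdjoinRoot.mk P α) = resultant P α := by
  classical
  let Ω := AlgebraicClosure F
  let pb := AdjoinRoot.powerBasis (Fact.out : Irreducible P).ne_zero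
  have : FiniteDimensional F (AdjoinRoot P) := pb.finite
  have hroots : (minpoly F pb.gen).aroots Ω = (P.map (algebraMap F Ω)).roots := by
    rw [AdjoinRoot.powerBasis_gen, AdjoinRoot.minpoly_root (Fact.out : Irreducible P).ne_zero,
      hm.leadingCoeff, inv_one, map_one, mul_one]
  have hnodup : ((minpoly F pb.gen).aroots Ω).Nodup := by
    rw [hroots]
    exact nodup_roots ((PerfectField.separable_of_irreducible Fact.out).map)
  let g : Ω → Ω := fun y => (α.map (algebraMap F Ω)).eval y
  apply (algebraMap F Ω).injective
  rw [Algebra.norm_eq_prod_embeddings F Ω, ← resultant_map_map,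
    ← natDegree_map (p := P) (algebraMap F Ω), ← natDegree_map (p := α) (algebraMap F Ω),
    resultant_eq_prod_eval _ _ _ le_rfl (IsAlgClosed.splits _), leadingCoeff_map,
    hm.leadingCoeff, map_one, one_pow, one_mul, ← hroots]
  calc ∏ σ : AdjoinRoot P →ₐ[F] Ω, σ (AdjoinRoot.mk P α)
      = ∏ σ : AdjoinRoot P →ₐ[F] Ω, g (pb.liftEquiv' σ) :=
        Finset.prod_congr rfl fun σ _ => by
          simp only [g]
          rw [pb.liftEquiv'_apply_coe, AdjoinRoot.powerBasis_gen, eval_map_algebraMap,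
            aeval_algHom_apply, AdjoinRoot.aeval_eq]
    _ = ∏ y : {y // y ∈ (minpoly F pb.gen).aroots Ω}, g y :=
        pb.liftEquiv'.prod_comp fun y : {y // y ∈ (minpoly F pb.gen).aroots Ω} => g y
    _ = ∏ y ∈ ⟨_, hnodup⟩, g y :=
        (Finset.prod_subtype (⟨_, hnodup⟩ : Finset Ω) (fun _ => Iff.rfl) g).symm

section FiniteField

variable {F : Type} [Field F] [Fintype F]

theorem eulerSym_eq_of_mk_pow_eq (hF : ringChar F ≠ 2) {P α : F[X]} [Fact (Irreducible P)]
    {c : F} (hc : c = 1 ∨ c = -1)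
    (h : AdjoinRoot.mk P (α ^ ((Fintype.card F ^ P.natDegree - 1) / 2)) = AdjoinRoot.of P c) :
    eulerSym F α P = c := by
  rcases hc with rfl | rfl
  · rw [eulerSym, if_pos]
    rw [← AdjoinRoot.mk_eq_zero, map_sub, h, map_one, map_one, sub_self]
  · rw [eulerSym, if_neg, if_pos]
    · rw [← AdjoinRoot.mk_eq_zero, map_add, h, map_one, ← map_one (AdjoinRoot.of P), ← map_add,
        neg_add_cancel, map_zero]
    · rw [← AdjoinRoot.mk_eq_zero, map_sub, h, map_one, ← map_one (AdjoinRoot.of P), ← map_sub,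
        map_eq_zero_iff _ (AdjoinRoot.of P).injective, sub_eq_zero]
      exact Ring.neg_one_ne_one_of_char_ne_two hF

theorem eulerSym_eq_resultant_pow (hq : Odd (Fintype.card F)) {P : F[X]} (hP : Irreducible P)
    (hm : P.Monic) {α : F[X]} (hPα : ¬ P ∣ α) :
    eulerSym F α P = resultant P α ^ ((Fintype.card F - 1) / 2) := by
  have : Fact (Irreducible P) := ⟨hP⟩
  have hF : ringChar F ≠ 2 := by
    rw [Ne, FiniteField.even_card_iff_char_two, Nat.odd_iff.mp hq]
    decide
  have hres : resultant P α ≠ 0 := resultant_ne_zero P α ((hP.coprime_iff_not_dvd).2 hPα)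
  refine eulerSym_eq_of_mk_pow_eq hF ?_ ?_
  · have hhalf : Fintype.card F / 2 = (Fintype.card F - 1) / 2 := by
      obtain ⟨k, hk⟩ := hq
      omega
    exact hhalf ▸ FiniteField.pow_dichotomy hF hres
  · let pb := AdjoinRoot.powerBasis hP.ne_zero
    have : Module.Finite F (AdjoinRoot P) := pb.finite
    have : Finite (AdjoinRoot P) := Module.finite_of_finite F
    have hcard : Nat.card (AdjoinRoot P) = Fintype.card F ^ P.natDegree := by
      rw [Module.natCard_eq_pow_finrank (K := F), pb.finrank, AdjoinRoot.powerBasis_dim,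
        Nat.card_eq_fintype_card]
    rw [map_pow, ← AdjoinRoot.norm_mk_eq_resultant hm, ← AdjoinRoot.algebraMap_eq, map_pow,
      FiniteField.algebraMap_norm_eq_pow, ← pow_mul, hcard, Nat.card_eq_fintype_card,
      Nat.pow_sub_one_div_mul_half hq]

theorem Polynomial.resultant_multiset_prod_left {R : Type*} [CommRing R] (s : Multiset R[X])
    (hs : ∀ p ∈ s, p.Monic) (g : R[X]) :
    resultant s.prod g = (s.map fun p => resultant p g).prod := by
  induction s using Multiset.induction_on with
  | empty => simp
  | cons p s ih =>
    have hp : p.Monic := hs p (Multiset.mem_cons_self p s)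
    have hs' : ∀ p ∈ s, p.Monic := fun p h => hs p (Multiset.mem_cons_of_mem h)
    have hprod : s.prod.Monic := by simpa using monic_multiset_prod_of_monic s id hs'
    rw [Multiset.prod_cons, hp.natDegree_mul hprod,
      resultant_mul_left _ _ _ _ le_rfl, ih hs', Multiset.map_cons, Multiset.prod_cons]

theorem qrSym_eq_resultant_pow (hq : Odd (Fintype.card F)) {α β : F[X]} (hβ : β ≠ 0)
    (hco : IsCoprime α β) :
    qrSym F α β =
      (β.leadingCoeff⁻¹ ^ α.natDegree * resultant β α) ^ ((Fintype.card F - 1) / 2) := by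
  classical
  have hfactors : ∀ P ∈ normalizedFactors β, P.Monic ∧ eulerSym F α P =
      resultant P α ^ ((Fintype.card F - 1) / 2) := by
    intro P hP
    have hirr : Irreducible P := irreducible_of_normalized_factor P hP
    have hmonic : P.Monic := normalize_normalized_factor P hP ▸ monic_normalize hirr.ne_zero
    refine ⟨hmonic, eulerSym_eq_resultant_pow hq hirr hmonic fun hPα => ?_⟩
    exact hirr.not_isUnit (hco.isUnit_of_dvd' hPα (dvd_of_mem_normalizedFactors hP))
  have hlc : β.leadingCoeff⁻¹ ≠ 0 := inv_ne_zero (leadingCoeff_ne_zero.mpr hβ)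
  rw [qrSym, Multiset.map_congr rfl fun P hP => (hfactors P hP).2, Multiset.prod_map_pow,
    ← resultant_multiset_prod_left _ fun P hP => (hfactors P hP).1, prod_normalizedFactors_eq hβ,
    normalize_apply, coe_normUnit_of_ne_zero hβ, mul_comm, ← resultant_C_mul_left,
    natDegree_C_mul hlc]

end FiniteField

/-- The general quadratic reciprocity law in `F_q[t]` (`q` odd): for coprime nonzero
`α, β`, `(α/β)·(β/α)⁻¹ = (-1)^{((q-1)/2)·deg α·deg β} · sgn(α)^{((q-1)/2)·deg β} ·
sgn(β)^{-((q-1)/2)·deg α}`. -/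
theorem stmt6 (F : Type) [Field F] [Fintype F] (hq : Odd (Fintype.card F))
    (α β : Polynomial F) (hα : α ≠ 0) (hβ : β ≠ 0) (hco : IsCoprime α β) :
    qrSym F α β * (qrSym F β α)⁻¹ =
      (-1 : F) ^ ((Fintype.card F - 1) / 2 * α.natDegree * β.natDegree) *
        α.leadingCoeff ^ ((Fintype.card F - 1) / 2 * β.natDegree) *
        (β.leadingCoeff ^ ((Fintype.card F - 1) / 2 * α.natDegree))⁻¹ := by
  have hratio : ∀ {x y s r : F} (n : ℕ), r ≠ 0 → s * s = 1 →
      (y * r) ^ n * ((x * (s * r)) ^ n)⁻¹ = (s * x⁻¹ * y) ^ n := fun n hr hs => by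
    rw [← inv_pow, ← mul_pow, mul_inv, mul_inv, (eq_inv_of_mul_eq_one_left hs).symm]
    field_simp
  rw [qrSym_eq_resultant_pow hq hβ hco, qrSym_eq_resultant_pow hq hα hco.symm, resultant_comm α β,
    hratio _ (resultant_ne_zero β α hco.symm) (by rw [← mul_pow, neg_one_mul, neg_neg, one_pow])]
  simp only [inv_pow, inv_inv]
  ring
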